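/- If ∇ ⊢ t₁ ≈ t₂ and t₂ ∼ t₃ (weak equivalence), then ∇ ⊢ t₁ ≈ t₃. -/

import Mathlib

abbrev Atom := ℕ
abbrev Var := ℕ
abbrev Perm := List (Atom × Atom)

def swap (p : Atom × Atom) (a : Atom) : Atom :=
  if a = p.1 then p.2 else if a = p.2 then p.1 else a

def permAtom : Perm → Atom → Atom
  | [], a => a
  | p :: π, a => swap p (permAtom π a)

def ds (π π' : Perm) : Set Atom := {a | permAtom π a ≠ permAtom π' a}

inductive Trm : Type
  | unit : Trm
  | pair : Trm → Trm → Trm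
  | fn : ℕ → Trm → Trm
  | atom : Atom → Trm
  | abs : Atom → Trm → Trm
  | susp : Perm → Var → Trm

def permTrm (π : Perm) : Trm → Trm
  | .unit => .unit
  | .pair t₁ t₂ => .pair (permTrm π t₁) (permTrm π t₂)
  | .fn f t => .fn f (permTrm π t)
  | .atom a => .atom (permAtom π a)
  | .abs a t => .abs (permAtom π a) (permTrm π t)
  | .susp π' X => .susp (π ++ π') X

abbrev Env := Set (Atom × Var)

inductive fresh (Γ : Env) (a : Atom) : Trm → Prop
  | unit : fresh Γ a .unit
  | pair {t₁ t₂} : fresh Γ a t₁ → fresh Γ a t₂ → fresh Γ a (.pair t₁ t₂)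
  | fn {f t} : fresh Γ a t → fresh Γ a (.fn f t)
  | abs₁ {t} : fresh Γ a (.abs a t)
  | abs₂ {b t} : a ≠ b → fresh Γ a t → fresh Γ a (.abs b t)
  | atom {b} : a ≠ b → fresh Γ a (.atom b)
  | susp {π X} : (permAtom π.reverse a, X) ∈ Γ → fresh Γ a (.susp π X)

inductive equ (Γ : Env) : Trm → Trm → Prop
  | unit : equ Γ .unit .unit
  | pair {t₁ t₂ s₁ s₂} : equ Γ t₁ t₂ → equ Γ s₁ s₂ → equ Γ (.pair t₁ s₁) (.pair t₂ s₂)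
  | fn {f t₁ t₂} : equ Γ t₁ t₂ → equ Γ (.fn f t₁) (.fn f t₂)
  | abs₁ {a t₁ t₂} : equ Γ t₁ t₂ → equ Γ (.abs a t₁) (.abs a t₂)
  | abs₂ {a b t₁ t₂} : a ≠ b → fresh Γ a t₂ → equ Γ t₁ (permTrm [(a, b)] t₂) →
      equ Γ (.abs a t₁) (.abs b t₂)
  | atom {a} : equ Γ (.atom a) (.atom a)
  | susp {π π' X} : (∀ c ∈ ds π π', (c, X) ∈ Γ) → equ Γ (.susp π X) (.susp π' X)

inductive weak : Trm → Trm → Prop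
  | unit : weak .unit .unit
  | atom {a} : weak (.atom a) (.atom a)
  | fn {f t t'} : weak t t' → weak (.fn f t) (.fn f t')
  | pair {t₁ t₂ s₁ s₂} : weak t₁ s₁ → weak t₂ s₂ → weak (.pair t₁ t₂) (.pair s₁ s₂)
  | abs {a t t'} : weak t t' → weak (.abs a t) (.abs a t')
  | susp {π π' X} : ds π π' = ∅ → weak (.susp π X) (.susp π' X)

def subst (σ : Var → Option Trm) : Trm → Trm
  | .unit => .unit
  | .pair t₁ t₂ => .pair (subst σ t₁) (subst σ t₂)
  | .fn f t => .fn f (subst σ t)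
  | .atom a => .atom a
  | .abs a t => .abs a (subst σ t)
  | .susp π X =>
      match σ X with
      | some t => permTrm π t
      | none => .susp π X

/-! Induction on the derivation of `t₁ ≈ t₂`, inverting `t₂ ∼ t₃` at each step. Weakly equivalent
suspensions carry permutations that act identically on atoms (and so do their inverses), hence
weak equivalence preserves freshness, is stable under the permutation action needed in the
`a.t ≈ b.t'` rule, and leaves disagreement sets unchanged. -/

lemma swap_swap (p : Atom × Atom) (a : Atom) : swap p (swap p a) = a := by
  unfold swap
  split_ifs <;> simp_all

@[simp]
lemma permAtom_append (π π' : Perm) (a : Atom) :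
    permAtom (π ++ π') a = permAtom π (permAtom π' a) := by
  induction π with
  | nil => rfl
  | cons p π ih => simp [permAtom, ih]

lemma permAtom_permAtom_reverse (π : Perm) (a : Atom) :
    permAtom π (permAtom π.reverse a) = a := by
  induction π generalizing a with
  | nil => rfl
  | cons p π ih =>
    rw [List.reverse_cons, permAtom_append]
    change swap p (permAtom π (permAtom π.reverse (swap p a))) = a
    rw [ih, swap_swap]

lemma permAtom_reverse_permAtom (π : Perm) (a : Atom) :
    permAtom π.reverse (permAtom π a) = a := by
  simpa using permAtom_permAtom_reverse π.reverse a

lemma ds_eq_empty_iff {π π' : Perm} : ds π π' = ∅ ↔ ∀ a, permAtom π a = permAtom π' a := by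
  simp [ds, Set.eq_empty_iff_forall_notMem]

lemma permAtom_reverse_eq_of_ds_eq_empty {π π' : Perm} (h : ds π π' = ∅) (a : Atom) :
    permAtom π.reverse a = permAtom π'.reverse a := by
  calc permAtom π.reverse a
      = permAtom π'.reverse (permAtom π' (permAtom π.reverse a)) :=
        (permAtom_reverse_permAtom π' _).symm
    _ = permAtom π'.reverse (permAtom π (permAtom π.reverse a)) := by
        rw [ds_eq_empty_iff.mp h]
    _ = permAtom π'.reverse a := by rw [permAtom_permAtom_reverse]

lemma ds_eq_of_ds_eq_empty {π' π'' : Perm} (h : ds π' π'' = ∅) (π : Perm) :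
    ds π π'' = ds π π' := by
  ext a
  simp [ds, ds_eq_empty_iff.mp h a]

lemma fresh.of_weak {Γ : Env} {a : Atom} {t t' : Trm}
    (hf : fresh Γ a t) (hw : weak t t') : fresh Γ a t' := by
  induction hw generalizing a with
  | unit | atom => exact hf
  | fn _ ih => cases hf with | fn h => exact .fn (ih h)
  | pair _ _ ih₁ ih₂ => cases hf with | pair h₁ h₂ => exact .pair (ih₁ h₁) (ih₂ h₂)
  | abs _ ih =>
    cases hf with
    | abs₁ => exact .abs₁
    | abs₂ hne h => exact .abs₂ hne (ih h)
  | susp hds =>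
    cases hf with
    | susp h => exact .susp (by rwa [← permAtom_reverse_eq_of_ds_eq_empty hds])

lemma weak.permTrm {t t' : Trm} (π : Perm) (hw : weak t t') :
    weak (permTrm π t) (permTrm π t') := by
  induction hw with
  | unit => exact .unit
  | atom => exact .atom
  | fn _ ih => exact .fn ih
  | pair _ _ ih₁ ih₂ => exact .pair ih₁ ih₂
  | abs _ ih => exact .abs ih
  | susp hds =>
    refine .susp (ds_eq_empty_iff.mpr fun a => ?_)
    simp [ds_eq_empty_iff.mp hds a]

theorem equ_weak (Γ : Env) (t₁ t₂ t₃ : Trm)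
    (h₁ : equ Γ t₁ t₂) (h₂ : weak t₂ t₃) : equ Γ t₁ t₃ := by
  induction h₁ generalizing t₃ with
  | unit => cases h₂; exact .unit
  | atom => cases h₂; exact .atom
  | pair _ _ ih₁ ih₂ => cases h₂ with | pair w₁ w₂ => exact .pair (ih₁ _ w₁) (ih₂ _ w₂)
  | fn _ ih => cases h₂ with | fn w => exact .fn (ih _ w)
  | abs₁ _ ih => cases h₂ with | abs w => exact .abs₁ (ih _ w)
  | abs₂ hne hf _ ih =>
    cases h₂ with
    | abs w => exact .abs₂ hne (hf.of_weak w) (ih _ (w.permTrm _))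
  | susp h =>
    cases h₂ with
    | susp hds => exact .susp (ds_eq_of_ds_eq_empty hds _ ▸ h)
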